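/- arXiv:1711.10594 — 4 statements merged into one kernel-verified Lean document; each statement's English description precedes it below -/
import Mathlib

section
/- For even N, the vector P := Σ_{i=1}^{N/2} e_{2i−1,2i} (a perfect matching of K_N) satisfies P · A_k = 1 for every k ∈ [N], hence P is orthogonal to every element of C_2 = span{A_1 + A_j : 2 ≤ j ≤ N−1}, but P does not lie in the triangle space C_1^⊥. -/
open Finset

/-- Index type for edges of the complete graph on `Fin n`: non-diagonal unordered pairs. -/
abbrev EdgeIdx (n : ℕ) := {p : Sym2 (Fin n) // ¬ p.IsDiag}

/-- The GF(2) edge space of the complete graph `K_n`. -/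
abbrev EdgeSpace (n : ℕ) := EdgeIdx n → ZMod 2

/-- The basis vector `e_{ij}` of the edge space (zero when `i = j`). -/
def eVec (n : ℕ) (i j : Fin n) : EdgeSpace n :=
  fun p => if (p : Sym2 (Fin n)) = s(i, j) then 1 else 0

/-- The star vector `A_j := Σ_{l ≠ j} e_{lj}` (the term `l = j` contributes zero). -/
def starVec (n : ℕ) (j : Fin n) : EdgeSpace n := ∑ l : Fin n, eVec n l j

/-- The triangle vector `T_{ijk} := e_{ij} + e_{jk} + e_{ki}`. -/
def triVec (n : ℕ) (i j k : Fin n) : EdgeSpace n := eVec n i j + eVec n j k + eVec n k i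

/-- The GF(2) dot product on the edge space. -/
def edot {n : ℕ} (v w : EdgeSpace n) : ZMod 2 := ∑ p : EdgeIdx n, v p * w p

/-- `C_1 = span{A_1, …, A_{n-1}}` (vertices `0, …, n-2` in 0-indexed notation). -/
def C1 (n : ℕ) : Submodule (ZMod 2) (EdgeSpace n) :=
  Submodule.span (ZMod 2) (starVec n '' {j : Fin n | (j : ℕ) < n - 1})

/-- `C_1^⊥ = span{T_{1jk} : 2 ≤ j < k ≤ n}` (triangles through vertex `0`). -/
def C1perp (n : ℕ) [NeZero n] : Submodule (ZMod 2) (EdgeSpace n) :=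
  Submodule.span (ZMod 2)
    {v | ∃ j k : Fin n, j ≠ 0 ∧ k ≠ 0 ∧ j ≠ k ∧ v = triVec n 0 j k}

/-- `C_2 = span{A_1 + A_j : 2 ≤ j ≤ n-1}` (vertices `1, …, n-2` in 0-indexed notation). -/
def C2 (n : ℕ) [NeZero n] : Submodule (ZMod 2) (EdgeSpace n) :=
  Submodule.span (ZMod 2)
    {v | ∃ j : Fin n, 0 < (j : ℕ) ∧ (j : ℕ) < n - 1 ∧ v = starVec n 0 + starVec n j}

/-- Hamming weight (size of the support). -/
def wt {n : ℕ} (v : EdgeSpace n) : ℕ := (Finset.univ.filter fun p => v p ≠ 0).card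

/-- The perfect-matching vector `Σ_{i=1}^{N/2} e_{2i-1, 2i}` (0-indexed: edges `{2i, 2i+1}`). -/
def matching (N : ℕ) : EdgeSpace N :=
  ∑ i : Fin (N / 2),
    eVec N ⟨2 * i.val, by have := i.isLt; omega⟩ ⟨2 * i.val + 1, by have := i.isLt; omega⟩

/-- Restriction of an edge-space vector to the coordinates of edges incident to vertex `r`;
recorded as the function `k ↦ v(e_{rk})` (with value `0` at `k = r`). -/
def projVec (n : ℕ) (r : Fin n) (v : EdgeSpace n) : Fin n → ZMod 2 :=
  fun k => edot v (eVec n r k)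


section Aux

variable {n : ℕ}

lemma edot_add_right (v w1 w2 : EdgeSpace n) : edot v (w1 + w2) = edot v w1 + edot v w2 := by
  simp [edot, mul_add, Finset.sum_add_distrib]

lemma edot_add_left (v1 v2 w : EdgeSpace n) : edot (v1 + v2) w = edot v1 w + edot v2 w := by
  simp [edot, add_mul, Finset.sum_add_distrib]

lemma edot_zero_right (v : EdgeSpace n) : edot v 0 = 0 := by simp [edot]

lemma edot_zero_left (v : EdgeSpace n) : edot 0 v = 0 := by simp [edot]

lemma edot_smul_right (c : ZMod 2) (v w : EdgeSpace n) : edot v (c • w) = c * edot v w := by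
  simp [edot, Finset.mul_sum, mul_left_comm]

lemma edot_smul_left (c : ZMod 2) (v w : EdgeSpace n) : edot (c • v) w = c * edot v w := by
  simp [edot, Finset.mul_sum, mul_assoc]

lemma edot_sum_left {α : Type*} (s : Finset α) (w : α → EdgeSpace n) (v : EdgeSpace n) :
    edot (∑ i ∈ s, w i) v = ∑ i ∈ s, edot (w i) v := by
  simp only [edot, Finset.sum_apply, Finset.sum_mul]
  exact Finset.sum_comm

lemma edot_eVec_star (a b k : Fin n) (hab : a ≠ b) :
    edot (eVec n a b) (starVec n k) = if k = a ∨ k = b then 1 else 0 := by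
  have hdiag : ¬ (s(a, b) : Sym2 (Fin n)).IsDiag := by simpa using hab
  unfold edot eVec starVec
  rw [Finset.sum_eq_single (⟨s(a, b), hdiag⟩ : EdgeIdx n)]
  · have hX : ((⟨s(a, b), hdiag⟩ : EdgeIdx n) : Sym2 (Fin n)) = s(a, b) := rfl
    simp only [Finset.sum_apply, eVec, hX, if_true, one_mul]
    by_cases hka : k = a
    · rw [if_pos (Or.inl hka)]
      have hcond : ∀ l : Fin n, ((s(a, b) : Sym2 (Fin n)) = s(l, k)) ↔ l = b := by
        intro l
        rw [hka, Sym2.eq_iff]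
        constructor
        · rintro (⟨_, h2⟩ | ⟨_, h2⟩)
          · exact absurd h2.symm hab
          · exact h2.symm
        · rintro rfl; exact Or.inr ⟨rfl, rfl⟩
      simp only [hcond]
      rw [Finset.sum_ite_eq' Finset.univ b (fun _ => (1 : ZMod 2))]
      simp
    · by_cases hkb : k = b
      · rw [if_pos (Or.inr hkb)]
        have hcond : ∀ l : Fin n, ((s(a, b) : Sym2 (Fin n)) = s(l, k)) ↔ l = a := by
          intro l
          rw [hkb, Sym2.eq_iff]
          constructor
          · rintro (⟨h1, _⟩ | ⟨h1, _⟩)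
            · exact h1.symm
            · exact absurd h1 hab
          · rintro rfl; exact Or.inl ⟨rfl, rfl⟩
        simp only [hcond]
        rw [Finset.sum_ite_eq' Finset.univ a (fun _ => (1 : ZMod 2))]
        simp
      · rw [if_neg (by tauto)]
        have hcond : ∀ l : Fin n, ¬ ((s(a, b) : Sym2 (Fin n)) = s(l, k)) := by
          intro l h
          rw [Sym2.eq_iff] at h
          rcases h with ⟨_, h2⟩ | ⟨h1, _⟩
          · exact hkb h2.symm
          · exact hka h1.symm
        simp [hcond]
  · intro p _ hp
    rw [if_neg, zero_mul]
    intro h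
    exact hp (Subtype.ext h)
  · intro h
    exact absurd (Finset.mem_univ _) h

lemma matching_star (N : ℕ) (hN : 4 ≤ N) (hEven : Even N) (k : Fin N) :
    edot (matching N) (starVec N k) = 1 := by
  have hN2 := Nat.even_iff.mp hEven
  unfold matching
  rw [edot_sum_left]
  have hterm : ∀ i : Fin (N / 2),
      edot (eVec N ⟨2 * i.val, by have := i.isLt; omega⟩ ⟨2 * i.val + 1, by have := i.isLt; omega⟩)
        (starVec N k)
      = if k.val = 2 * i.val ∨ k.val = 2 * i.val + 1 then 1 else 0 := by
    intro i
    rw [edot_eVec_star _ _ _ (by simp [Fin.ext_iff])]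
    simp [Fin.ext_iff]
  rw [Finset.sum_congr rfl (fun i _ => hterm i)]
  have hk2 : k.val / 2 < N / 2 := by have := k.isLt; omega
  rw [Finset.sum_eq_single (⟨k.val / 2, hk2⟩ : Fin (N / 2))]
  · have hc : k.val = 2 * ((⟨k.val / 2, hk2⟩ : Fin (N / 2)) : ℕ) ∨
        k.val = 2 * ((⟨k.val / 2, hk2⟩ : Fin (N / 2)) : ℕ) + 1 := by
      show k.val = 2 * (k.val / 2) ∨ k.val = 2 * (k.val / 2) + 1
      omega
    rw [if_pos hc]
  · intro i _ hi
    rw [if_neg]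
    intro h
    apply hi
    apply Fin.ext
    show i.val = k.val / 2
    omega
  · intro h
    exact absurd (Finset.mem_univ _) h

lemma tri_star (N : ℕ) [NeZero N] (j k : Fin N) (hj : j ≠ 0) (hk : k ≠ 0) (hjk : j ≠ k) :
    edot (triVec N 0 j k) (starVec N 0) = 0 := by
  unfold triVec
  rw [edot_add_left, edot_add_left,
    edot_eVec_star 0 j 0 (Ne.symm hj),
    edot_eVec_star j k 0 hjk,
    edot_eVec_star k 0 0 hk]
  rw [if_pos (Or.inl rfl), if_pos (Or.inr rfl), if_neg]
  · decide
  · rintro (h | h)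
    · exact hj h.symm
    · exact hk h.symm

end Aux

/-- For even `N ≥ 4`, the perfect-matching vector `P = Σ_{i=1}^{N/2} e_{2i-1,2i}`
satisfies `P · A_k = 1` for every `k`, hence is orthogonal to every element of
`C_2 = span{A_1 + A_j : 2 ≤ j ≤ N-1}`, but does not lie in the triangle space `C_1^⊥`. -/
theorem matching_properties (N : ℕ) [NeZero N] (hN : 4 ≤ N) (hEven : Even N) :
    (∀ k : Fin N, edot (matching N) (starVec N k) = 1) ∧
    (∀ w ∈ C2 N, edot (matching N) w = 0) ∧
    matching N ∉ C1perp N := by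
  have h1 : ∀ k : Fin N, edot (matching N) (starVec N k) = 1 := matching_star N hN hEven
  refine ⟨h1, ?_, ?_⟩
  · intro w hw
    induction hw using Submodule.span_induction with
    | mem v hv =>
      obtain ⟨j, _, _, rfl⟩ := hv
      rw [edot_add_right, h1, h1]
      decide
    | zero => exact edot_zero_right _
    | add v w _ _ hv hw => rw [edot_add_right, hv, hw, add_zero]
    | smul c v _ hv => rw [edot_smul_right, hv, mul_zero]
  · intro hmem
    have hzero : ∀ v ∈ C1perp N, edot v (starVec N 0) = 0 := by
      intro v hv
      induction hv using Submodule.span_induction with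
      | mem v hv =>
        obtain ⟨j, k, hj, hk, hjk, rfl⟩ := hv
        exact tri_star N j k hj hk hjk
      | zero => exact edot_zero_left _
      | add v w _ _ hv hw => rw [edot_add_left, hv, hw, add_zero]
      | smul c v _ hv => rw [edot_smul_left, hv, mul_zero]
    have h0 := hzero _ hmem
    rw [h1 0] at h0
    exact one_ne_zero h0
end

section
/- For even N ≥ 4, the minimum Hamming weight of an element of C_2^⊥ \ C_1^⊥ equals N/2, achieved by the perfect matching vector Σ_{i=1}^{N/2} e_{2i−1,2i}. -/
open Finset

/-!
Read a vector of the edge space as the edge set of a graph on `Fin N`; then `v ⬝ᵥ A_r` is the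
parity of the degree of `r`. The space `C_1^⊥` is the cycle space, the vectors with all degrees
even: modulo the edges at `0` every edge `jk` equals the triangle `T_{0jk}`, and a vector supported
on the edges at `0` with all other degrees even vanishes. Orthogonality to `C_2` says that all
degrees have the same parity. Hence an element of `C_2^⊥ \ C_1^⊥` has all degrees odd, so its graph
has no isolated vertex and at least `N/2` edges; the perfect matching, of degree one everywhere,
attains this.
-/

open Matrix

section EdgeSpace

variable {n : ℕ}

def edge {i j : Fin n} (h : i ≠ j) : EdgeIdx n := ⟨s(i, j), Sym2.mk_isDiag_iff.not.mpr h⟩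

lemma edot_eq_dotProduct (v w : EdgeSpace n) : edot v w = v ⬝ᵥ w := rfl

lemma eVec_comm (i j : Fin n) : eVec n i j = eVec n j i := by
  funext p
  simp only [eVec, Sym2.eq_swap]

lemma eVec_eq_single {i j : Fin n} (h : i ≠ j) : eVec n i j = Pi.single (edge h) 1 := by
  funext p
  simp only [eVec, Pi.single_apply, edge, Subtype.ext_iff]

lemma starVec_apply (r : Fin n) (p : EdgeIdx n) :
    starVec n r p = if r ∈ (p : Sym2 (Fin n)) then 1 else 0 := by
  obtain ⟨z, hz⟩ := p
  induction z using Sym2.ind with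
  | _ a b =>
  have hab : a ≠ b := Sym2.mk_isDiag_iff.not.mp hz
  simp only [starVec, Finset.sum_apply, eVec, Sym2.mem_iff]
  by_cases ha : r = a
  · subst ha
    rw [Finset.sum_eq_single b] <;> aesop
  by_cases hb : r = b
  · subst hb
    rw [Finset.sum_eq_single a] <;> aesop
  · rw [Finset.sum_eq_zero] <;> aesop

lemma dotProduct_starVec (v : EdgeSpace n) (r : Fin n) :
    v ⬝ᵥ starVec n r = ∑ p : EdgeIdx n, if r ∈ (p : Sym2 (Fin n)) then v p else 0 := by
  simp only [dotProduct, starVec_apply, mul_ite, mul_one, mul_zero]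

lemma single_dotProduct_starVec (p : EdgeIdx n) (r : Fin n) :
    Pi.single p 1 ⬝ᵥ starVec n r = if r ∈ (p : Sym2 (Fin n)) then 1 else 0 := by
  rw [single_dotProduct, one_mul, starVec_apply]

lemma eVec_dotProduct_starVec {i j : Fin n} (h : i ≠ j) (r : Fin n) :
    eVec n i j ⬝ᵥ starVec n r = if r = i ∨ r = j then 1 else 0 := by
  simp only [eVec_eq_single h, single_dotProduct_starVec, edge, Sym2.mem_iff]

/-- Handshake lemma: every edge has two endpoints. -/
lemma sum_starVec : ∑ r, starVec n r = 0 := by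
  funext p
  simp only [Finset.sum_apply, starVec_apply, Finset.sum_boole, Pi.zero_apply]
  have : (Finset.univ.filter (· ∈ (p : Sym2 (Fin n)))) = (p : Sym2 (Fin n)).toFinset := by
    ext; simp [Sym2.mem_toFinset]
  rw [this, Sym2.card_toFinset_of_not_isDiag _ p.2]
  rfl

lemma triVec_dotProduct_starVec {i j k : Fin n} (hij : i ≠ j) (hjk : j ≠ k) (hki : k ≠ i)
    (r : Fin n) : triVec n i j k ⬝ᵥ starVec n r = 0 := by
  simp only [triVec, add_dotProduct, eVec_dotProduct_starVec hij, eVec_dotProduct_starVec hjk,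
    eVec_dotProduct_starVec hki]
  by_cases hi : r = i <;> by_cases hj : r = j <;> by_cases hk : r = k <;> simp_all <;> decide

end EdgeSpace

section CyclePart

variable {n : ℕ}

def starSupported (r : Fin n) : Submodule (ZMod 2) (EdgeSpace n) where
  carrier := {v | ∀ p : EdgeIdx n, r ∉ (p : Sym2 (Fin n)) → v p = 0}
  add_mem' hv hw p hp := by simp [hv p hp, hw p hp]
  zero_mem' _ _ := rfl
  smul_mem' c v hv p hp := by simp [hv p hp]

lemma eVec_mem_starSupported (r j : Fin n) : eVec n r j ∈ starSupported r := by
  intro p hp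
  simp only [eVec, ite_eq_right_iff, one_ne_zero, imp_false]
  intro h
  exact hp (h ▸ Sym2.mem_mk_left r j)

/-- Modulo the star of `0`, the edge `jk` equals the triangle `T_{0jk}`. -/
lemma single_mem_C1perp_sup_starSupported [NeZero n] (p : EdgeIdx n) :
    Pi.single p 1 ∈ C1perp n ⊔ starSupported 0 := by
  by_cases h0 : (0 : Fin n) ∈ (p : Sym2 (Fin n))
  · refine Submodule.mem_sup_right fun q hq => Pi.single_eq_of_ne ?_ _
    rintro rfl
    exact hq h0
  obtain ⟨z, hz⟩ := p
  induction z using Sym2.ind with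
  | _ j k =>
  have hjk : j ≠ k := Sym2.mk_isDiag_iff.not.mp hz
  obtain ⟨hj, hk⟩ : j ≠ 0 ∧ k ≠ 0 := by
    simp only [Sym2.mem_iff, not_or] at h0
    exact ⟨Ne.symm h0.1, Ne.symm h0.2⟩
  have htri : triVec n 0 j k ∈ C1perp n := Submodule.subset_span ⟨j, k, hj, hk, hjk, rfl⟩
  have hstar : eVec n 0 j + eVec n 0 k ∈ starSupported (0 : Fin n) :=
    add_mem (eVec_mem_starSupported 0 j) (eVec_mem_starSupported 0 k)
  have hsplit : Pi.single (edge hjk) 1 = triVec n 0 j k - (eVec n 0 j + eVec n 0 k) := by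
    rw [← eVec_eq_single hjk, triVec, eVec_comm k 0]
    abel
  change Pi.single (edge hjk) 1 ∈ _
  rw [hsplit]
  exact Submodule.sub_mem _ (Submodule.mem_sup_left htri) (Submodule.mem_sup_right hstar)

lemma C1perp_sup_starSupported [NeZero n] : C1perp n ⊔ starSupported 0 = ⊤ := by
  refine eq_top_iff.mpr fun v _ => ?_
  rw [← Finset.univ_sum_single v]
  refine Submodule.sum_mem _ fun p _ => ?_
  rw [show Pi.single p (v p) = v p • Pi.single p 1 by rw [← Pi.single_smul', smul_eq_mul, mul_one]]
  exact Submodule.smul_mem _ _ (single_mem_C1perp_sup_starSupported p)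

/-- A vector on the star of `r` is read off from the degrees at the other endpoints. -/
lemma eq_zero_of_mem_starSupported {r : Fin n} {s : EdgeSpace n} (hs : s ∈ starSupported r)
    (hdeg : ∀ b ≠ r, s ⬝ᵥ starVec n b = 0) : s = 0 := by
  funext q
  by_cases hr : r ∈ (q : Sym2 (Fin n))
  swap
  · exact hs q hr
  set b := Sym2.Mem.other hr
  have hb : b ≠ r := Sym2.other_ne q.2 hr
  have hq : (q : Sym2 (Fin n)) = s(r, b) := (Sym2.other_spec hr).symm
  have := hdeg b hb
  rw [dotProduct_starVec, Finset.sum_eq_single q] at this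
  · rwa [if_pos (hq ▸ Sym2.mem_mk_right r b)] at this
  · intro p _ hpq
    split_ifs with hbp
    · refine hs p fun hrp => hpq (Subtype.ext ?_)
      rw [hq, ← Sym2.mem_and_mem_iff hb.symm]
      exact ⟨hrp, hbp⟩
    · rfl
  · simp

lemma dotProduct_starVec_eq_zero_of_mem_C1perp [NeZero n] {v : EdgeSpace n} (hv : v ∈ C1perp n)
    (r : Fin n) : v ⬝ᵥ starVec n r = 0 := by
  induction hv using Submodule.span_induction with
  | mem x hx =>
    obtain ⟨j, k, hj, hk, hjk, rfl⟩ := hx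
    exact triVec_dotProduct_starVec hj.symm hjk hk r
  | zero => exact zero_dotProduct _
  | add x y _ _ hx hy => rw [add_dotProduct, hx, hy, add_zero]
  | smul c x _ hx => rw [smul_dotProduct, hx, smul_zero]

lemma mem_C1perp_iff [NeZero n] {v : EdgeSpace n} :
    v ∈ C1perp n ↔ ∀ r, v ⬝ᵥ starVec n r = 0 := by
  refine ⟨dotProduct_starVec_eq_zero_of_mem_C1perp, fun hv => ?_⟩
  obtain ⟨t, ht, s, hs, rfl⟩ :=
    Submodule.mem_sup.mp (C1perp_sup_starSupported (n := n) ▸ Submodule.mem_top (x := v))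
  have hs0 : s = 0 := eq_zero_of_mem_starSupported hs fun b _ => by
    simpa only [add_dotProduct, dotProduct_starVec_eq_zero_of_mem_C1perp ht, zero_add] using hv b
  rwa [hs0, add_zero]

end CyclePart

section Degrees

variable {n : ℕ}

lemma forall_edot_C2_eq_zero_of_dotProduct_starVec_eq [NeZero n] {v : EdgeSpace n}
    (hv : ∀ r, v ⬝ᵥ starVec n r = v ⬝ᵥ starVec n 0) : ∀ w ∈ C2 n, edot v w = 0 := by
  intro w hw
  induction hw using Submodule.span_induction with
  | mem x hx =>
    obtain ⟨j, -, -, rfl⟩ := hx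
    rw [edot_eq_dotProduct, dotProduct_add, hv j, CharTwo.add_self_eq_zero]
  | zero => exact dotProduct_zero _
  | add x y _ _ hx hy => simp_all only [edot_eq_dotProduct, dotProduct_add, add_zero]
  | smul c x _ hx => simp_all only [edot_eq_dotProduct, dotProduct_smul, smul_zero]

lemma dotProduct_starVec_eq_of_forall_edot_C2_eq_zero [NeZero n] (hn : Even n)
    {v : EdgeSpace n} (hv : ∀ w ∈ C2 n, edot v w = 0) (r : Fin n) :
    v ⬝ᵥ starVec n r = v ⬝ᵥ starVec n 0 := by
  have hgen : ∀ j : Fin n, (j : ℕ) < n - 1 → v ⬝ᵥ starVec n j = v ⬝ᵥ starVec n 0 := by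
    intro j hj
    rcases Nat.eq_zero_or_pos j with hj0 | hj0
    · rw [show j = 0 from Fin.ext hj0]
    have := hv _ (Submodule.subset_span ⟨j, hj0, hj, rfl⟩)
    rw [edot_eq_dotProduct, dotProduct_add, CharTwo.add_eq_zero] at this
    exact this.symm
  by_cases hr : (r : ℕ) < n - 1
  · exact hgen r hr
  -- Only the last vertex is not covered by the generators; the handshake lemma settles it.
  have hsum : ∑ q, (v ⬝ᵥ starVec n q + v ⬝ᵥ starVec n 0) = 0 := by
    rw [Finset.sum_add_distrib, ← dotProduct_sum, sum_starVec, dotProduct_zero, zero_add,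
      Finset.sum_const, Finset.card_univ, Fintype.card_fin, nsmul_eq_mul,
      (ZMod.natCast_eq_zero_iff_even).mpr hn, zero_mul]
  rw [Finset.sum_eq_single r, CharTwo.add_eq_zero] at hsum
  · exact hsum
  · intro q _ hq
    rw [hgen q (by omega), CharTwo.add_self_eq_zero]
  · simp

lemma le_two_mul_wt {v : EdgeSpace n} (hv : ∀ r, v ⬝ᵥ starVec n r ≠ 0) : n ≤ 2 * wt v := by
  set S := Finset.univ.filter fun p => v p ≠ 0
  have hcover : Finset.univ ⊆ S.biUnion fun p => (p : Sym2 (Fin n)).toFinset := by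
    intro r _
    obtain ⟨p, -, hp⟩ := Finset.exists_ne_zero_of_sum_ne_zero (dotProduct_starVec v r ▸ hv r)
    have hrp : r ∈ (p : Sym2 (Fin n)) := by
      by_contra h
      exact hp (if_neg h)
    refine Finset.mem_biUnion.mpr ⟨p, ?_, Sym2.mem_toFinset.mpr hrp⟩
    simpa [S, hrp] using hp
  calc n = (Finset.univ : Finset (Fin n)).card := (Finset.card_fin n).symm
    _ ≤ (S.biUnion fun p => (p : Sym2 (Fin n)).toFinset).card := Finset.card_le_card hcover
    _ ≤ S.card * 2 := Finset.card_biUnion_le_card_mul _ _ _ fun p _ =>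
        (Sym2.card_toFinset_of_not_isDiag _ p.2).le
    _ = 2 * wt v := mul_comm _ _

lemma wt_sum_single (s : Finset (EdgeIdx n)) :
    wt (∑ p ∈ s, Pi.single p (1 : ZMod 2)) = s.card := by
  unfold wt
  congr 1
  ext q
  simp [Finset.sum_apply, Finset.sum_pi_single]

end Degrees

section Matching

variable {N : ℕ}

def matchingEdge (N : ℕ) (i : Fin (N / 2)) : EdgeIdx N :=
  edge (i := ⟨2 * i, by omega⟩) (j := ⟨2 * i + 1, by omega⟩) (by simp [Fin.ext_iff])

lemma mem_matchingEdge_iff (r : Fin N) (i : Fin (N / 2)) :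
    r ∈ (matchingEdge N i : Sym2 (Fin N)) ↔ (r : ℕ) / 2 = i := by
  simp only [matchingEdge, edge, Sym2.mem_iff, Fin.ext_iff]
  omega

lemma matchingEdge_injective : Function.Injective (matchingEdge N) := by
  intro i j hij
  have h2i : (⟨2 * i, by omega⟩ : Fin N) ∈ (matchingEdge N i : Sym2 (Fin N)) :=
    (mem_matchingEdge_iff _ i).mpr (by simp)
  rw [hij, mem_matchingEdge_iff] at h2i
  exact Fin.ext (by simpa using h2i)

lemma matching_eq_sum_single : matching N = ∑ i, Pi.single (matchingEdge N i) 1 :=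
  Finset.sum_congr rfl fun _ _ => eVec_eq_single _

lemma matching_dotProduct_starVec (hN : Even N) (r : Fin N) : matching N ⬝ᵥ starVec N r = 1 := by
  have hr : (r : ℕ) / 2 < N / 2 := by obtain ⟨m, rfl⟩ := hN; omega
  simp only [matching_eq_sum_single, sum_dotProduct, single_dotProduct_starVec,
    mem_matchingEdge_iff]
  rw [Finset.sum_eq_single ⟨(r : ℕ) / 2, hr⟩ (fun i _ hi => if_neg fun h => hi (Fin.ext h).symm)
    (by simp), if_pos rfl]

lemma wt_matching : wt (matching N) = N / 2 := by
  rw [matching_eq_sum_single, ← Finset.sum_image (f := fun p => Pi.single p (1 : ZMod 2))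
    fun i _ j _ h => matchingEdge_injective h,
    wt_sum_single, Finset.card_image_of_injective _ matchingEdge_injective, Finset.card_univ,
    Fintype.card_fin]

end Matching

theorem min_weight_eq_half_general (N : ℕ) [NeZero N] (hEven : Even N) :
    (∀ w ∈ C2 N, edot (matching N) w = 0) ∧
    matching N ∉ C1perp N ∧
    wt (matching N) = N / 2 ∧
    (∀ P : EdgeSpace N, (∀ w ∈ C2 N, edot P w = 0) → P ∉ C1perp N → N / 2 ≤ wt P) := by
  have hmatching := matching_dotProduct_starVec hEven
  refine ⟨forall_edot_C2_eq_zero_of_dotProduct_starVec_eq fun r => by rw [hmatching, hmatching],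
    fun h => one_ne_zero ((hmatching 0).symm.trans (mem_C1perp_iff.mp h 0)), wt_matching, ?_⟩
  intro P hC2 hC1
  have hsame := dotProduct_starVec_eq_of_forall_edot_C2_eq_zero hEven hC2
  have hodd : ∀ r, P ⬝ᵥ starVec N r ≠ 0 := fun r hr =>
    hC1 (mem_C1perp_iff.mpr fun q => (hsame q).trans ((hsame r).symm.trans hr))
  have := le_two_mul_wt hodd
  omega

/-- For even `N ≥ 4`, the minimum Hamming weight of an element of `C_2^⊥ \ C_1^⊥` equals
`N/2`, achieved by the perfect-matching vector `Σ_{i=1}^{N/2} e_{2i-1,2i}`. -/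
theorem min_weight_eq_half (N : ℕ) [NeZero N] (hN : 4 ≤ N) (hEven : Even N) :
    (∀ w ∈ C2 N, edot (matching N) w = 0) ∧
    matching N ∉ C1perp N ∧
    wt (matching N) = N / 2 ∧
    (∀ P : EdgeSpace N, (∀ w ∈ C2 N, edot P w = 0) → P ∉ C1perp N → N / 2 ≤ wt P) :=
  min_weight_eq_half_general N hEven
end

section
/- If a vector w in the GF(2) edge space of K_n is supported on edges not incident to a fixed vertex r and w · A_k = 0 for all k ∈ [n], then w lies in the span of the triangles {T_{rij} : i, j ≠ r, i ≠ j}, all of which contain vertex r — in particular, if additionally w · T_{rij} = 0 for all such triangles, then w = 0. -/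
open Finset

lemma edot_eVec {n : ℕ} (w : EdgeSpace n) (a b : Fin n) (hab : a ≠ b) :
    edot w (eVec n a b) = w ⟨s(a, b), by simpa using hab⟩ := by
  unfold edot eVec
  rw [Fintype.sum_eq_single (⟨s(a, b), by simpa using hab⟩ : EdgeIdx n)]
  · simp
  · intro q hq
    simp only [mul_ite, mul_one, mul_zero, ite_eq_right_iff]
    intro h
    exact absurd (Subtype.ext h) hq

lemma edot_star {n : ℕ} (w : EdgeSpace n) (k : Fin n) :
    edot w (starVec n k) =
      ∑ p : EdgeIdx n, w p * (if k ∈ (p : Sym2 (Fin n)) then 1 else 0) := by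
  unfold edot starVec
  refine Finset.sum_congr rfl fun p _ => ?_
  congr 1
  rw [Finset.sum_apply]
  have hrepr : (p : Sym2 (Fin n)) = s((Quot.out (p : Sym2 (Fin n))).1, (Quot.out (p : Sym2 (Fin n))).2) :=
    (Quot.out_eq _).symm
  set a := (Quot.out (p : Sym2 (Fin n))).1
  set b := (Quot.out (p : Sym2 (Fin n))).2
  have hab : a ≠ b := by
    intro h; exact p.2 (by rw [hrepr]; simpa using h)
  by_cases hk : k ∈ (p : Sym2 (Fin n))
  · rw [if_pos hk]
    have hk' : k = a ∨ k = b := by rwa [hrepr, Sym2.mem_iff] at hk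
    rcases hk' with h | h
    · subst h
      rw [Fintype.sum_eq_single b]
      · simp [eVec, hrepr, Sym2.eq_swap]
      · intro l hl
        simp only [eVec, ite_eq_right_iff]
        intro h
        rw [hrepr, Sym2.eq_iff] at h
        rcases h with ⟨h1, h2⟩ | ⟨h1, h2⟩
        · exact absurd h2.symm hab
        · exact absurd h2.symm hl
    · subst h
      rw [Fintype.sum_eq_single a]
      · simp [eVec, hrepr]
      · intro l hl
        simp only [eVec, ite_eq_right_iff]
        intro h
        rw [hrepr, Sym2.eq_iff] at h
        rcases h with ⟨h1, h2⟩ | ⟨h1, h2⟩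
        · exact absurd h1.symm hl
        · exact absurd h1 hab
  · rw [if_neg hk]
    refine Finset.sum_eq_zero fun l _ => ?_
    simp only [eVec, ite_eq_right_iff]
    intro h
    exact absurd (h ▸ Sym2.mem_mk_right l k) hk

/-- If `w` is supported on edges not incident to a fixed vertex `r` and `w · A_k = 0`
for all `k`, then `w` lies in the span of the triangles `{T_{rij} : i, j ≠ r, i ≠ j}`
through `r`; in particular, if additionally `w · T_{rij} = 0` for all such triangles,
then `w = 0`. -/
theorem even_off_r_mem_span_triangles_through_r (n : ℕ) (hn : 3 ≤ n) (r : Fin n)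
    (w : EdgeSpace n)
    (hsupp : ∀ k : Fin n, k ≠ r → edot w (eVec n r k) = 0)
    (heven : ∀ k : Fin n, edot w (starVec n k) = 0) :
    w ∈ Submodule.span (ZMod 2)
        {v | ∃ i j : Fin n, i ≠ r ∧ j ≠ r ∧ i ≠ j ∧ v = triVec n r i j} ∧
    ((∀ i j : Fin n, i ≠ r → j ≠ r → i ≠ j → edot w (triVec n r i j) = 0) → w = 0) := by
  classical
  -- vanishing on edges incident to r, stated indexwise
  have hzero : ∀ (q : EdgeIdx n) (k : Fin n) (hk : k ≠ r),
      (q : Sym2 (Fin n)) = s(r, k) → w q = 0 := by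
    intro q k hk hq
    have h := hsupp k hk
    rw [edot_eVec w r k (Ne.symm hk)] at h
    rw [show q = ⟨s(r, k), by simpa using (Ne.symm hk)⟩ from Subtype.ext hq]
    exact h
  set a : EdgeIdx n → Fin n := fun p => (Quot.out (p : Sym2 (Fin n))).1 with ha
  set b : EdgeIdx n → Fin n := fun p => (Quot.out (p : Sym2 (Fin n))).2 with hb
  have hrepr : ∀ p : EdgeIdx n, (p : Sym2 (Fin n)) = s(a p, b p) := fun p =>
    (Quot.out_eq _).symm
  have hne : ∀ p : EdgeIdx n, a p ≠ b p := by
    intro p h; exact p.2 (by rw [hrepr p]; simpa using h)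
  set S : Finset (EdgeIdx n) := Finset.univ.filter fun p => w p ≠ 0 with hSdef
  have hS1 : ∀ p ∈ S, w p = 1 := by
    intro p hp
    have := (Finset.mem_filter.1 hp).2
    revert this; generalize w p = x; revert x; decide
  have haR : ∀ p ∈ S, a p ≠ r := by
    intro p hp h
    exact (Finset.mem_filter.1 hp).2
      (hzero p (b p) (fun hbr => hne p (h.trans hbr.symm)) (by rw [hrepr p, h]))
  have hbR : ∀ p ∈ S, b p ≠ r := by
    intro p hp h
    refine (Finset.mem_filter.1 hp).2
      (hzero p (a p) (fun har => hne p (har.trans h.symm)) ?_)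
    rw [hrepr p, h, Sym2.eq_swap]
  -- degree condition restated on S
  have heven' : ∀ k : Fin n,
      ∑ p ∈ S, (if k ∈ (p : Sym2 (Fin n)) then (1 : ZMod 2) else 0) = 0 := by
    intro k
    have h := heven k
    rw [edot_star] at h
    calc ∑ p ∈ S, (if k ∈ (p : Sym2 (Fin n)) then (1 : ZMod 2) else 0)
        = ∑ p ∈ S, w p * (if k ∈ (p : Sym2 (Fin n)) then 1 else 0) :=
          Finset.sum_congr rfl fun p hp => by rw [hS1 p hp, one_mul]
      _ = ∑ p : EdgeIdx n, w p * (if k ∈ (p : Sym2 (Fin n)) then 1 else 0) := by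
          refine Finset.sum_subset (Finset.filter_subset _ _) fun p _ hp => ?_
          have : w p = 0 := by
            by_contra hc; exact hp (Finset.mem_filter.2 ⟨Finset.mem_univ p, hc⟩)
          rw [this, zero_mul]
      _ = 0 := h
  -- the key decomposition
  have key : w = ∑ p ∈ S, triVec n r (a p) (b p) := by
    funext q
    rw [Finset.sum_apply]
    simp only [triVec, Pi.add_apply]
    rw [Finset.sum_add_distrib, Finset.sum_add_distrib]
    have hmid : ∑ p ∈ S, eVec n (a p) (b p) q = w q := by
      have step : ∀ p ∈ S, eVec n (a p) (b p) q = if p = q then 1 else 0 := by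
        intro p _
        simp only [eVec]
        congr 1
        rw [eq_iff_iff]
        constructor
        · intro h; exact (Subtype.ext (h.trans (hrepr p).symm)).symm
        · intro h; rw [h, hrepr q]
      rw [Finset.sum_congr rfl step, Finset.sum_ite_eq' S q (fun _ => (1 : ZMod 2))]
      by_cases hq : w q = 0
      · rw [if_neg (by simp [hSdef, hq]), hq]
      · rw [if_pos (Finset.mem_filter.2 ⟨Finset.mem_univ q, hq⟩)]
        have := hS1 q (Finset.mem_filter.2 ⟨Finset.mem_univ q, hq⟩)
        exact this.symm
    by_cases hr : r ∈ (q : Sym2 (Fin n))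
    · -- q incident to r : w q = 0 and the star sums cancel
      obtain ⟨k, hk, hqk⟩ : ∃ k, k ≠ r ∧ (q : Sym2 (Fin n)) = s(r, k) := by
        have h := hr
        rw [hrepr q, Sym2.mem_iff] at h
        rcases h with h | h
        · exact ⟨b q, fun hc => hne q (h.symm.trans hc.symm), by rw [hrepr q, h]⟩
        · exact ⟨a q, fun hc => hne q (hc.trans h), by rw [hrepr q, h, Sym2.eq_swap]⟩
      have hwq : w q = 0 := hzero q k hk hqk
      have h1 : ∀ p ∈ S, eVec n r (a p) q = if a p = k then (1 : ZMod 2) else 0 := by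
        intro p hp
        simp only [eVec]
        congr 1
        rw [eq_iff_iff, hqk, Sym2.eq_iff]
        constructor
        · rintro (⟨-, h2⟩ | ⟨h1, -⟩)
          · exact h2.symm
          · exact absurd h1.symm (haR p hp)
        · intro h; exact Or.inl ⟨rfl, h.symm⟩
      have h3 : ∀ p ∈ S, eVec n (b p) r q = if b p = k then (1 : ZMod 2) else 0 := by
        intro p hp
        simp only [eVec]
        congr 1
        rw [eq_iff_iff, hqk, Sym2.eq_iff]
        constructor
        · rintro (⟨h1, -⟩ | ⟨-, h2⟩)
          · exact absurd h1.symm (hbR p hp)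
          · exact h2.symm
        · intro h; exact Or.inr ⟨rfl, h.symm⟩
      have hcancel : (∑ p ∈ S, eVec n r (a p) q) + ∑ p ∈ S, eVec n (b p) r q = 0 := by
        rw [Finset.sum_congr rfl h1, Finset.sum_congr rfl h3, ← Finset.sum_add_distrib]
        have step : ∀ p ∈ S,
            ((if a p = k then (1 : ZMod 2) else 0) + if b p = k then 1 else 0)
              = if k ∈ (p : Sym2 (Fin n)) then 1 else 0 := by
          intro p _
          by_cases hA : a p = k <;> by_cases hB : b p = k
          · exact absurd (hA.trans hB.symm) (hne p)
          · simp [hA, hB, hrepr p, Sym2.mem_iff, eq_comm]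
          · simp [hA, hB, hrepr p, Sym2.mem_iff, eq_comm]
          · rw [if_neg hA, if_neg hB, hrepr p, add_zero]
            simp only [Sym2.mem_iff]
            rw [if_neg]
            rintro (h | h)
            · exact hA h.symm
            · exact hB h.symm
        rw [Finset.sum_congr rfl step]
        exact heven' k
      rw [hmid]
      rw [show (∑ p ∈ S, eVec n r (a p) q) + w q + ∑ p ∈ S, eVec n (b p) r q
            = w q + ((∑ p ∈ S, eVec n r (a p) q) + ∑ p ∈ S, eVec n (b p) r q) by ring,
          hcancel, add_zero]
    · -- q not incident to r : the star sums vanish termwise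
      have h1 : ∑ p ∈ S, eVec n r (a p) q = 0 := by
        refine Finset.sum_eq_zero fun p _ => ?_
        simp only [eVec, ite_eq_right_iff]
        intro h
        exact absurd (h ▸ Sym2.mem_mk_left r (a p)) hr
      have h3 : ∑ p ∈ S, eVec n (b p) r q = 0 := by
        refine Finset.sum_eq_zero fun p _ => ?_
        simp only [eVec, ite_eq_right_iff]
        intro h
        exact absurd (h ▸ Sym2.mem_mk_right (b p) r) hr
      rw [h1, h3, hmid, zero_add, add_zero]
  constructor
  · rw [key]
    exact Submodule.sum_mem _ fun p hp =>
      Submodule.subset_span ⟨a p, b p, haR p hp, hbR p hp, hne p, rfl⟩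
  · intro htri
    funext q
    by_cases hr : r ∈ (q : Sym2 (Fin n))
    · obtain ⟨k, hk, hqk⟩ : ∃ k, k ≠ r ∧ (q : Sym2 (Fin n)) = s(r, k) := by
        have h := hr
        rw [hrepr q, Sym2.mem_iff] at h
        rcases h with h | h
        · exact ⟨b q, fun hc => hne q (h.symm.trans hc.symm), by rw [hrepr q, h]⟩
        · exact ⟨a q, fun hc => hne q (hc.trans h), by rw [hrepr q, h, Sym2.eq_swap]⟩
      exact hzero q k hk hqk
    · have har : a q ≠ r := fun h => hr (by rw [hrepr q, h]; exact Sym2.mem_mk_left r _)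
      have hbr : b q ≠ r := fun h => hr (by rw [hrepr q, h]; exact Sym2.mem_mk_right _ r)
      have h := htri (a q) (b q) har hbr (hne q)
      simp only [triVec, edot] at h ⊢
      have expand : ∑ p : EdgeIdx n,
          w p * (eVec n r (a q) + eVec n (a q) (b q) + eVec n (b q) r) p
          = edot w (eVec n r (a q)) + edot w (eVec n (a q) (b q)) + edot w (eVec n (b q) r) := by
        simp only [edot, Pi.add_apply, mul_add, Finset.sum_add_distrib]
      rw [expand] at h
      rw [hsupp (a q) har] at h
      have hbr' : edot w (eVec n (b q) r) = 0 := by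
        have : eVec n (b q) r = eVec n r (b q) := by
          funext p; simp only [eVec, Sym2.eq_swap]
        rw [this]; exact hsupp (b q) hbr
      rw [hbr', zero_add, add_zero] at h
      rw [edot_eVec w (a q) (b q) (hne q)] at h
      rw [show q = ⟨s(a q, b q), by simpa using hne q⟩ from Subtype.ext (hrepr q)]
      exact h
end

section
/- The map sending x ∈ C_2 to its restriction x_r onto the edges incident to a fixed vertex r is injective; i.e., no nonzero element of C_2 is supported entirely on edges avoiding vertex r (for N even). -/
open Finset

lemma starVec_apply_s17 {n : ℕ} (j a b : Fin n) (hab : a ≠ b)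
    (h : ¬ (s(a, b) : Sym2 (Fin n)).IsDiag) :
    starVec n j ⟨s(a, b), h⟩ = if j = a ∨ j = b then 1 else 0 := by
  unfold starVec eVec
  rw [Finset.sum_apply]
  by_cases hja : j = a
  · subst hja
    rw [Finset.sum_eq_single b]
    · simp [Sym2.eq_iff]
    · intro l _ hl
      simp only [ite_eq_right_iff, Sym2.eq_iff]
      rintro (⟨h1, h2⟩ | ⟨h1, h2⟩) <;> simp_all
    · simp
  · by_cases hjb : j = b
    · subst hjb
      rw [Finset.sum_eq_single a]
      · simp [Sym2.eq_iff]
      · intro l _ hl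
        simp only [ite_eq_right_iff, Sym2.eq_iff]
        rintro (⟨h1, h2⟩ | ⟨h1, h2⟩) <;> simp_all
      · simp
    · rw [if_neg (by tauto)]
      apply Finset.sum_eq_zero
      intro l _
      simp only [ite_eq_right_iff, Sym2.eq_iff]
      rintro (⟨h1, h2⟩ | ⟨h1, h2⟩) <;> simp_all

lemma sum_c_starVec {n : ℕ} (c : Fin n → ZMod 2) (a b : Fin n) (hab : a ≠ b)
    (h : ¬ (s(a, b) : Sym2 (Fin n)).IsDiag) :
    (∑ v, c v • starVec n v) ⟨s(a, b), h⟩ = c a + c b := by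
  rw [Finset.sum_apply]
  have key : ∀ v : Fin n, (c v • starVec n v) ⟨s(a, b), h⟩
      = if v ∈ ({a, b} : Finset (Fin n)) then c v else 0 := by
    intro v
    rw [Pi.smul_apply, smul_eq_mul, starVec_apply_s17 v a b hab h]
    simp only [Finset.mem_insert, Finset.mem_singleton]
    by_cases hv : v = a ∨ v = b <;> simp [hv]
  simp only [key]
  rw [Finset.sum_ite_mem, Finset.univ_inter, Finset.sum_pair hab]

lemma projVec_eq {n : ℕ} (r k : Fin n) (hrk : r ≠ k) (x : EdgeSpace n)
    (h : ¬ (s(r, k) : Sym2 (Fin n)).IsDiag) :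
    projVec n r x k = x ⟨s(r, k), h⟩ := by
  unfold projVec edot eVec
  rw [Finset.sum_eq_single (⟨s(r, k), h⟩ : EdgeIdx n)]
  · simp
  · intro p _ hp
    have : (p : Sym2 (Fin n)) ≠ s(r, k) := fun hc => hp (Subtype.ext hc)
    simp [this]
  · simp

lemma projVec_add {n : ℕ} (r : Fin n) (x z : EdgeSpace n) (k : Fin n) :
    projVec n r (x + z) k = projVec n r x k + projVec n r z k := by
  unfold projVec edot
  simp [add_mul, Finset.sum_add_distrib]

lemma C2_mem_repr (N : ℕ) [NeZero N] (hN : 4 ≤ N) (x : EdgeSpace N)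
    (hx : x ∈ C2 N) :
    ∃ c : Fin N → ZMod 2, c ⟨N - 1, by omega⟩ = 0 ∧ x = ∑ v, c v • starVec N v := by
  induction hx using Submodule.span_induction with
  | mem v hv =>
    obtain ⟨j, hj0, hjN, rfl⟩ := hv
    refine ⟨fun v => (if v = 0 then 1 else 0) + (if v = j then 1 else 0), ?_, ?_⟩
    · have h1 : (⟨N - 1, by omega⟩ : Fin N) ≠ 0 := by
        intro hc
        have := congrArg Fin.val hc
        simp at this
        omega
      have h2 : (⟨N - 1, by omega⟩ : Fin N) ≠ j := by
        intro hc
        have := congrArg Fin.val hc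
        simp at this
        omega
      simp [h1, h2]
    · simp only [add_smul, ite_smul, one_smul, zero_smul, Finset.sum_add_distrib,
        Finset.sum_ite_eq', Finset.mem_univ, if_true]
  | zero => exact ⟨0, rfl, by simp⟩
  | add a b _ _ ha hb =>
    obtain ⟨c1, hc1, rfl⟩ := ha
    obtain ⟨c2, hc2, rfl⟩ := hb
    exact ⟨c1 + c2, by simp [hc1, hc2], by rw [← Finset.sum_add_distrib]; simp [add_smul]⟩
  | smul t a _ ha =>
    obtain ⟨c, hc, rfl⟩ := ha
    exact ⟨t • c, by simp [hc], by rw [Finset.smul_sum]; simp [smul_smul]⟩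

lemma C2_proj_zero (N : ℕ) [NeZero N] (hN : 4 ≤ N) (r : Fin N)
    (x : EdgeSpace N) (hx : x ∈ C2 N) (h0 : ∀ k : Fin N, projVec N r x k = 0) :
    x = 0 := by
  obtain ⟨c, hlast, rfl⟩ := C2_mem_repr N hN x hx
  have hsolve : ∀ a b : ZMod 2, a + b = 0 → b = a := by decide
  have hck : ∀ k : Fin N, k ≠ r → c k = c r := by
    intro k hkr
    have hne : ¬ (s(r, k) : Sym2 (Fin N)).IsDiag := by
      rw [Sym2.mk_isDiag_iff]
      exact fun hc => hkr hc.symm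
    have := h0 k
    rw [projVec_eq r k (fun hc => hkr hc.symm) _ hne,
      sum_c_starVec c r k (fun hc => hkr hc.symm) hne] at this
    exact hsolve _ _ this
  have hcr : c r = 0 := by
    by_cases hr : (⟨N - 1, by omega⟩ : Fin N) = r
    · rw [← hr]; exact hlast
    · rw [← hck _ hr]; exact hlast
  have hcz : ∀ k : Fin N, c k = 0 := by
    intro k
    by_cases hk : k = r
    · rw [hk]; exact hcr
    · rw [hck k hk]; exact hcr
  apply Finset.sum_eq_zero
  intro v _
  rw [hcz v, zero_smul]

/-- The map sending `x ∈ C_2` to its restriction onto the edges incident to a fixed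
vertex `r` is injective; equivalently, no nonzero element of `C_2` is supported entirely
on edges avoiding vertex `r` (`N` even). -/
theorem C2_restriction_injective (N : ℕ) [NeZero N] (hN : 4 ≤ N) (hEven : Even N)
    (r : Fin N) :
    (∀ x ∈ C2 N, ∀ z ∈ C2 N, projVec N r x = projVec N r z → x = z) ∧
    (∀ x ∈ C2 N, (∀ k : Fin N, projVec N r x k = 0) → x = 0) := by
  have hsolve : ∀ a b : ZMod 2, a + b = 0 → a = b := by decide
  constructor
  · intro x hx z hz hproj
    have hsum : x + z ∈ C2 N := add_mem hx hz
    have h0 : ∀ k : Fin N, projVec N r (x + z) k = 0 := by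
      intro k
      rw [projVec_add, congrFun hproj k]
      exact CharTwo.add_self_eq_zero _
    have := C2_proj_zero N hN r (x + z) hsum h0
    funext p
    exact hsolve _ _ (congrFun this p)
  · exact fun x hx h0 => C2_proj_zero N hN r x hx h0
end
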